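/- arXiv:math/0211001 — 2 statements merged into one kernel-verified Lean document; each statement's English description precedes it below -/
import Mathlib

section
/- For σ ∈ S_n and τ ∈ S_m (n, m ≥ 1), d(σ ⊗ τ) ≤ m - 1 + d(σ), where d(π) is the maximum over all intervals I and all initial intervals J of D_J(π(I)). -/
/-- The product `σ ⊗ τ` of `σ ∈ S_n` and `τ ∈ S_m`, as a function on `{0,...,nm-1}`. -/
def otimes (n m : ℕ) (σ τ : ℕ → ℕ) : ℕ → ℕ :=
  fun x => τ (x / n) + m * σ (x % n)

/-- Discrepancy `D_T(S) = | |S ∩ T| - |S||T|/N |` for finite sets of residues mod `N`. -/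
noncomputable def disc (N : ℕ) (S T : Finset ℕ) : ℝ :=
  |((S ∩ T).card : ℝ) - (S.card : ℝ) * (T.card : ℝ) / N|

/-- The (cyclic) interval of `Z_N` starting at `a` of length `len`, as a set of
representatives in `{0,...,N-1}`. -/
def cycInt (N a len : ℕ) : Finset ℕ :=
  (Finset.range len).image (fun i => (a + i) % N)

/-- `d(π)`: the maximum of `D_J(π(I))` over all intervals `I` and initial intervals `J`. -/
noncomputable def dInit (N : ℕ) (π : ℕ → ℕ) : ℝ :=
  sSup {x : ℝ | ∃ a len k, len ≤ N ∧ k ≤ N ∧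
    x = disc N ((cycInt N a len).image π) (Finset.range k)}

/-!
For `J = [0, k)` write `k = m q + r` with `r < m`, and `|I| = n u + t` with `t < n`. Since
`(σ ⊗ τ)(x) = τ(x / n) + m σ(x mod n)` with `τ(x / n) < m`, the values of `σ ⊗ τ` below `m q`
are exactly those at the points `x` with `σ(x mod n) < q`. As `x` runs through `I`, `x mod n`
runs `u` times through all of `Z_n` and then through an interval `I'` of length `t`, so these
points number `u q + |σ(I') ∩ [0, q)|`, and the discrepancy they contribute is exactly
`D_{[0,q)}(σ(I')) ≤ d(σ)`. The remaining values in `[m q, m q + r)` number at most `r`, as does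
their expected share `|I| r / (n m)`, so they add at most `r ≤ m - 1`.
-/

open Finset Function

lemma Nat.count_mul_add_of_periodic {p : ℕ → Prop} [DecidablePred p] {n : ℕ}
    (hp : Periodic p n) (u t : ℕ) :
    Nat.count p (n * u + t) = u * Nat.count p n + Nat.count p t := by
  induction u with
  | zero => simp
  | succ u ih =>
    rw [show n * (u + 1) + t = n + (n * u + t) by ring, Nat.count_add]
    simp_rw [add_comm n, show ∀ k, p (k + n) = p k from hp, ih]
    ring

lemma card_image_inter_range {S : Finset ℕ} {f : ℕ → ℕ} (hf : Set.InjOn f S) (k : ℕ) :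
    #(S.image f ∩ range k) = #{x ∈ S | f x < k} := by
  have hfilter : S.image f ∩ range k = {y ∈ S.image f | y < k} := by ext; simp
  rw [hfilter, filter_image, card_image_of_injOn (hf.mono (coe_subset.2 (filter_subset _ _)))]

lemma card_inter_range_eq_add (S : Finset ℕ) {k₀ k : ℕ} (h : k₀ ≤ k) :
    #(S ∩ range k) = #(S ∩ range k₀) + #(S ∩ Ico k₀ k) := by
  rw [range_eq_Ico, range_eq_Ico, ← card_union_of_disjoint
    ((Ico_disjoint_Ico_consecutive 0 k₀ k).mono inter_subset_right inter_subset_right),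
    ← inter_union_distrib_left, Ico_union_Ico_eq_Ico (Nat.zero_le _) h]

section CyclicInterval

variable {N len : ℕ}

lemma cycInt_injOn (a : ℕ) (h : len ≤ N) :
    Set.InjOn (fun i => (a + i) % N) (range len) := by
  intro i hi j hj hij
  simp only [coe_range, Set.mem_Iio] at hi hj
  have := Nat.ModEq.add_left_cancel' a hij
  rwa [Nat.ModEq, Nat.mod_eq_of_lt (hi.trans_le h), Nat.mod_eq_of_lt (hj.trans_le h)] at this

lemma card_cycInt (a : ℕ) (h : len ≤ N) : #(cycInt N a len) = len := by
  rw [cycInt, card_image_of_injOn (cycInt_injOn a h), card_range]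

lemma cycInt_subset_range (hN : 0 < N) (a len : ℕ) : cycInt N a len ⊆ range N := by
  intro x hx
  obtain ⟨i, -, rfl⟩ := mem_image.1 hx
  exact mem_range.2 (Nat.mod_lt _ hN)

lemma coe_cycInt_subset_Iio (hN : 0 < N) (a len : ℕ) : (cycInt N a len : Set ℕ) ⊆ Set.Iio N := by
  simpa using coe_subset.2 (cycInt_subset_range hN a len)

lemma cycInt_self (hN : 0 < N) (a : ℕ) : cycInt N a N = range N :=
  eq_of_subset_of_card_le (cycInt_subset_range hN a N) (by rw [card_cycInt a le_rfl, card_range])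

lemma card_filter_cycInt (a : ℕ) (h : len ≤ N) (p : ℕ → Prop) [DecidablePred p] :
    #{x ∈ cycInt N a len | p x} = Nat.count (fun i => p ((a + i) % N)) len := by
  rw [cycInt, filter_image, card_image_of_injOn
    ((cycInt_injOn a h).mono (coe_subset.2 (filter_subset _ _))), Nat.count_eq_card_filter_range]

end CyclicInterval

lemma count_comp_add_mod_lt {n : ℕ} {σ : ℕ → ℕ} (hσ : Set.BijOn σ (Set.Iio n) (Set.Iio n))
    (a : ℕ) {q : ℕ} (hq : q ≤ n) :
    Nat.count (fun i => σ ((a + i) % n) < q) n = q := by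
  rcases n.eq_zero_or_pos with rfl | hn
  · simp [Nat.le_zero.1 hq]
  have himage : (range n).image σ = range n := coe_injective (by simpa using hσ.image_eq)
  rw [← card_filter_cycInt a le_rfl (fun x => σ x < q), cycInt_self hn,
    ← card_image_inter_range (by simpa using hσ.injOn), himage,
    inter_eq_right.2 (range_subset_range.2 hq), card_range]

section Otimes

variable {n m : ℕ} {σ τ : ℕ → ℕ}

lemma otimes_mod (x : ℕ) (hτ : τ (x / n) < m) : otimes n m σ τ x % m = τ (x / n) := by
  rw [otimes, Nat.add_mul_mod_self_left, Nat.mod_eq_of_lt hτ]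

lemma otimes_div (x : ℕ) (hτ : τ (x / n) < m) : otimes n m σ τ x / m = σ (x % n) := by
  rw [otimes, Nat.add_mul_div_left _ _ (Nat.zero_lt_of_lt hτ), Nat.div_eq_of_lt hτ, zero_add]

lemma otimes_lt_mul_iff (x q : ℕ) (hτ : τ (x / n) < m) :
    otimes n m σ τ x < m * q ↔ σ (x % n) < q := by
  rw [← otimes_div (σ := σ) x hτ, Nat.div_lt_iff_lt_mul (Nat.zero_lt_of_lt hτ), mul_comm]

lemma otimes_injOn (hσ : Set.InjOn σ (Set.Iio n)) (hτ : Set.MapsTo τ (Set.Iio m) (Set.Iio m))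
    (hτ' : Set.InjOn τ (Set.Iio m)) : Set.InjOn (otimes n m σ τ) (Set.Iio (n * m)) := by
  intro x hx y hy hxy
  have hn : 0 < n := Nat.pos_of_mul_pos_right (Nat.zero_lt_of_lt hx)
  have hxm : x / n < m := Nat.div_lt_of_lt_mul hx
  have hym : y / n < m := Nat.div_lt_of_lt_mul hy
  have hdiv : x / n = y / n := hτ' hxm hym <| by
    rw [← otimes_mod (σ := σ) x (hτ hxm), ← otimes_mod (σ := σ) y (hτ hym), hxy]
  have hmod : x % n = y % n := hσ (Nat.mod_lt x hn) (Nat.mod_lt y hn) <| by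
    rw [← otimes_div (σ := σ) x (hτ hxm), ← otimes_div (σ := σ) y (hτ hym), hxy]
  rw [← Nat.div_add_mod x n, ← Nat.div_add_mod y n, hdiv, hmod]

end Otimes

lemma card_image_otimes_inter_range_mul {n m : ℕ} (hn : 0 < n) (hm : 0 < m) {σ τ : ℕ → ℕ}
    (hσ : Set.BijOn σ (Set.Iio n) (Set.Iio n)) (hτ : Set.BijOn τ (Set.Iio m) (Set.Iio m))
    (a : ℕ) {u t q : ℕ} (hlen : n * u + t ≤ n * m) (ht : t ≤ n) (hq : q ≤ n) :
    #((cycInt (n * m) a (n * u + t)).image (otimes n m σ τ) ∩ range (m * q))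
      = u * q + #((cycInt n a t).image σ ∩ range q) := by
  have hI := coe_cycInt_subset_Iio (Nat.mul_pos hn hm) a (n * u + t)
  have hτx : ∀ x ∈ cycInt (n * m) a (n * u + t), τ (x / n) < m := fun x hx =>
    hτ.mapsTo (Nat.div_lt_of_lt_mul (hI hx))
  have hperiodic : Periodic (fun i => σ ((a + i) % n) < q) n := fun i => by
    simp only [← add_assoc, Nat.add_mod_right]
  rw [card_image_inter_range ((otimes_injOn hσ.injOn hτ.mapsTo hτ.injOn).mono hI),
    filter_congr fun x hx => otimes_lt_mul_iff x q (hτx x hx), card_filter_cycInt a hlen]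
  simp only [Nat.mod_mul_right_mod]
  rw [Nat.count_mul_add_of_periodic hperiodic, count_comp_add_mod_lt hσ a hq,
    card_image_inter_range (hσ.injOn.mono (coe_cycInt_subset_Iio hn a t)),
    card_filter_cycInt a ht]

lemma disc_le_of_card_le {N : ℕ} {S T : Finset ℕ} (hS : #S ≤ N) (hT : #T ≤ N) :
    disc N S T ≤ N := by
  have hST : (#(S ∩ T) : ℝ) ≤ N := by exact_mod_cast (card_le_card inter_subset_right).trans hT
  have hprod : (#S : ℝ) * #T / N ≤ N := by
    rcases (Nat.zero_le N).eq_or_lt with rfl | hN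
    · simp
    rw [div_le_iff₀ (by exact_mod_cast hN)]
    exact mul_le_mul (by exact_mod_cast hS) (by exact_mod_cast hT) (by positivity) (by positivity)
  rw [disc, abs_le]
  constructor <;> linarith [show (0 : ℝ) ≤ #S * #T / N by positivity,
    show (0 : ℝ) ≤ #(S ∩ T) by positivity]

lemma disc_le_dInit {N len k : ℕ} (π : ℕ → ℕ) (a : ℕ) (hlen : len ≤ N) (hk : k ≤ N) :
    disc N ((cycInt N a len).image π) (range k) ≤ dInit N π := by
  refine le_csSup ⟨N, ?_⟩ ⟨a, len, k, hlen, hk, rfl⟩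
  rintro _ ⟨a, len, k, hlen, hk, rfl⟩
  refine disc_le_of_card_le ?_ (by simpa using hk)
  exact card_image_le.trans ((card_image_le.trans (card_range len).le).trans hlen)

lemma dInit_le {N : ℕ} {π : ℕ → ℕ} {c : ℝ}
    (h : ∀ a len k, len ≤ N → k ≤ N → disc N ((cycInt N a len).image π) (range k) ≤ c) :
    dInit N π ≤ c := by
  refine csSup_le ⟨_, 0, 0, 0, Nat.zero_le N, Nat.zero_le N, rfl⟩ ?_
  rintro _ ⟨a, len, k, hlen, hk, rfl⟩
  exact h a len k hlen hk

lemma abs_block_split_le {n m u t q r X E : ℕ} (hn : 0 < n) (hE : E ≤ r) (hr : r < m)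
    (hlen : n * u + t ≤ n * m) :
    |((u * q + X + E : ℕ) : ℝ) - ((n * u + t : ℕ) : ℝ) * ((m * q + r : ℕ) : ℝ) / ((n * m : ℕ) : ℝ)|
      ≤ m - 1 + |(X : ℝ) - t * q / n| := by
  have hn' : (0 : ℝ) < n := by exact_mod_cast hn
  have hm' : (0 : ℝ) < m := by exact_mod_cast Nat.zero_lt_of_lt hr
  set L : ℝ := n * u + t
  have hsplit : ((u * q + X + E : ℕ) : ℝ) - ((n * u + t : ℕ) : ℝ) * ((m * q + r : ℕ) : ℝ)
      / ((n * m : ℕ) : ℝ) = (X - t * q / n) + (E - L * r / (n * m)) := by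
    push_cast
    field_simp
    ring
  have hL : L ≤ n * m := by simp only [L]; exact_mod_cast hlen
  have hshare : L * r / (n * m) ≤ r := by
    rw [div_le_iff₀ (by positivity)]
    exact mul_le_mul_of_nonneg_right hL (by positivity) |>.trans_eq (mul_comm _ _)
  have hEr : (E : ℝ) ≤ r := by exact_mod_cast hE
  have hrm : (r : ℝ) ≤ m - 1 := by
    have : (r : ℝ) + 1 ≤ m := by exact_mod_cast hr
    linarith
  have hrest : |(E : ℝ) - L * r / (n * m)| ≤ m - 1 := by
    rw [abs_le]
    constructor <;> linarith [show (0 : ℝ) ≤ L * r / (n * m) by positivity,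
      show (0 : ℝ) ≤ E by positivity]
  rw [hsplit]
  linarith [abs_add_le ((X : ℝ) - t * q / n) (E - L * r / (n * m))]

theorem dInit_otimes (n m : ℕ) (hn : 0 < n) (hm : 0 < m) (σ τ : ℕ → ℕ)
    (hσ : Set.BijOn σ (Set.Iio n) (Set.Iio n))
    (hτ : Set.BijOn τ (Set.Iio m) (Set.Iio m)) :
    dInit (n * m) (otimes n m σ τ) ≤ (m : ℝ) - 1 + dInit n σ := by
  refine dInit_le fun a len k hlen hk => ?_
  obtain ⟨u, t, rfl, ht⟩ : ∃ u t, len = n * u + t ∧ t < n :=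
    ⟨len / n, len % n, (Nat.div_add_mod len n).symm, Nat.mod_lt len hn⟩
  obtain ⟨q, r, rfl, hr⟩ : ∃ q r, k = m * q + r ∧ r < m :=
    ⟨k / m, k % m, (Nat.div_add_mod k m).symm, Nat.mod_lt k hm⟩
  have hq : q ≤ n := Nat.le_of_mul_le_mul_left (by linarith) hm
  set P := (cycInt (n * m) a (n * u + t)).image (otimes n m σ τ)
  have hP : #P = n * u + t := by
    rw [card_image_of_injOn ((otimes_injOn hσ.injOn hτ.mapsTo hτ.injOn).mono
      (coe_cycInt_subset_Iio (Nat.mul_pos hn hm) a _)), card_cycInt a hlen]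
  have hhigh : #(P ∩ Ico (m * q) (m * q + r)) ≤ r :=
    (card_le_card inter_subset_right).trans (by simp)
  have hσt := disc_le_dInit σ a ht.le hq
  rw [disc, card_image_of_injOn (hσ.injOn.mono (coe_cycInt_subset_Iio hn a t)),
    card_cycInt a ht.le, card_range] at hσt
  rw [disc, card_inter_range_eq_add P (Nat.le_add_right _ r),
    card_image_otimes_inter_range_mul hn hm hσ hτ a hlen ht.le hq, hP, card_range]
  linarith [abs_block_split_le (q := q) (X := #((cycInt n a t).image σ ∩ range q)) hn hhigh hr hlen]
end

section
/- For every permutation σ ∈ S_N (N ≥ 2), the discrepancy satisfies D(σ) > (log N)/100 - 1, assuming Schmidt's theorem: for any points x_0, ..., x_{N-1} ∈ [0,1) there exist n ≤ N and α ∈ [0,1) with | |{x_0,...,x_{n-1}} ∩ [0,α)| - nα | > (log N)/100. -/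
/-- `D(π)`: the maximum of `D_J(π(I))` over all intervals `I, J` of `Z_N`. -/
noncomputable def DFull (N : ℕ) (π : ℕ → ℕ) : ℝ :=
  sSup {x : ℝ | ∃ a₁ l₁ a₂ l₂, l₁ ≤ N ∧ l₂ ≤ N ∧
    x = disc N ((cycInt N a₁ l₁).image π) (cycInt N a₂ l₂)}

lemma cycInt_zero_eq (N l : ℕ) (hl : l ≤ N) : cycInt N 0 l = Finset.range l := by
  ext k
  simp only [cycInt, Finset.mem_image, Finset.mem_range, zero_add]
  constructor
  · rintro ⟨i, hi, rfl⟩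
    exact lt_of_le_of_lt (Nat.mod_le i N) hi
  · intro hk
    exact ⟨k, hk, Nat.mod_eq_of_lt (lt_of_lt_of_le hk hl)⟩

theorem discrepancy_lower_bound (N : ℕ) (hN : 2 ≤ N) (π : ℕ → ℕ)
    (hπ : Set.BijOn π (Set.Iio N) (Set.Iio N))
    (schmidt : ∀ x : ℕ → ℝ, (∀ i < N, x i ∈ Set.Ico (0 : ℝ) 1) →
      ∃ n ≤ N, ∃ α ∈ Set.Ico (0 : ℝ) 1,
        |((((Finset.range n).filter (fun i => x i < α)).card : ℝ)) - n * α|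
          > Real.log N / 100) :
    DFull N π > Real.log N / 100 - 1 := by
  classical
  have hN0 : (0 : ℝ) < N := by positivity
  set x : ℕ → ℝ := fun i => (π i : ℝ) / N with hx
  have hmem : ∀ i < N, x i ∈ Set.Ico (0 : ℝ) 1 := by
    intro i hi
    have hπi : π i < N := hπ.mapsTo hi
    refine ⟨by positivity, ?_⟩
    rw [div_lt_one hN0]
    exact_mod_cast hπi
  obtain ⟨n, hn, α, hα, hbig⟩ := schmidt x hmem
  set m := ⌈α * N⌉₊ with hm
  have hmN : m ≤ N := Nat.ceil_le.mpr (by nlinarith [hα.1, hα.2])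
  have hfilt : ∀ i, x i < α ↔ π i < m := by
    intro i
    rw [hm, Nat.lt_ceil, hx]
    exact div_lt_iff₀ hN0
  have hcycn : cycInt N 0 n = Finset.range n := cycInt_zero_eq N n hn
  have hcycm : cycInt N 0 m = Finset.range m := cycInt_zero_eq N m hmN
  have hrangesub : (Finset.range n : Set ℕ) ⊆ Set.Iio N := by
    intro k hk
    simp only [Finset.coe_range, Set.mem_Iio] at hk ⊢
    exact lt_of_lt_of_le hk hn
  have hcardS : ((Finset.range n).image π).card = n := by
    rw [Finset.card_image_of_injOn (hπ.injOn.mono hrangesub), Finset.card_range]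
  have hinter : (Finset.range n).image π ∩ Finset.range m
      = ((Finset.range n).filter (fun i => π i < m)).image π := by
    ext y
    simp only [Finset.mem_inter, Finset.mem_image, Finset.mem_filter, Finset.mem_range]
    constructor
    · rintro ⟨⟨i, hi, rfl⟩, hy⟩
      exact ⟨i, ⟨hi, hy⟩, rfl⟩
    · rintro ⟨i, ⟨hi, hm'⟩, rfl⟩
      exact ⟨⟨i, hi, rfl⟩, hm'⟩
  have hcardI : ((Finset.range n).image π ∩ Finset.range m).card
      = ((Finset.range n).filter (fun i => π i < m)).card := by
    rw [hinter]
    refine Finset.card_image_of_injOn (hπ.injOn.mono ?_)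
    refine subset_trans ?_ hrangesub
    exact_mod_cast Finset.filter_subset _ _
  have hfilteq : (Finset.range n).filter (fun i => x i < α)
      = (Finset.range n).filter (fun i => π i < m) :=
    Finset.filter_congr (fun i _ => by simp [hfilt i])
  set c : ℝ := (((Finset.range n).filter (fun i => π i < m)).card : ℝ) with hc
  have hbig' : |c - n * α| > Real.log N / 100 := by
    rw [hc, ← hfilteq] at *
    exact hbig
  have hdiscval : disc N ((cycInt N 0 n).image π) (cycInt N 0 m)
      = |c - (n : ℝ) * m / N| := by
    rw [hcycn, hcycm, disc, hcardI, hcardS, Finset.card_range]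
  have h2 : α * N ≤ (m : ℝ) := Nat.le_ceil _
  have h3 : (m : ℝ) < α * N + 1 := Nat.ceil_lt_add_one (by nlinarith [hα.1])
  have hnN : (n : ℝ) ≤ N := by exact_mod_cast hn
  have hn0 : (0 : ℝ) ≤ n := Nat.cast_nonneg n
  have habs : |(n : ℝ) * α - (n : ℝ) * m / N| ≤ 1 := by
    have heq : (n : ℝ) * α - (n : ℝ) * m / N = (n : ℝ) * (α * N - m) / N := by
      field_simp
    rw [heq, abs_div, abs_of_pos hN0, div_le_one hN0, abs_mul,
      abs_of_nonneg hn0]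
    have h4 : |α * (N : ℝ) - m| ≤ 1 := abs_le.mpr ⟨by linarith, by linarith⟩
    nlinarith [abs_nonneg (α * (N : ℝ) - m)]
  have hkey : |c - (n : ℝ) * m / N| > Real.log N / 100 - 1 := by
    have htri := abs_sub_le c ((n : ℝ) * m / N) ((n : ℝ) * α)
    have hcomm : |(n : ℝ) * m / N - (n : ℝ) * α| = |(n : ℝ) * α - (n : ℝ) * m / N| :=
      abs_sub_comm _ _
    linarith
  have hbdd : BddAbove {x : ℝ | ∃ a₁ l₁ a₂ l₂, l₁ ≤ N ∧ l₂ ≤ N ∧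
      x = disc N ((cycInt N a₁ l₁).image π) (cycInt N a₂ l₂)} := by
    refine ⟨N, ?_⟩
    rintro x ⟨a₁, l₁, a₂, l₂, h₁, h₂, rfl⟩
    have hcT' : (cycInt N a₂ l₂).card ≤ N := by
      calc (cycInt N a₂ l₂).card ≤ (Finset.range l₂).card := Finset.card_image_le
        _ = l₂ := Finset.card_range l₂
        _ ≤ N := h₂
    have hcS : (((cycInt N a₁ l₁).image π).card : ℝ) ≤ N := by
      have : ((cycInt N a₁ l₁).image π).card ≤ N := by
        calc ((cycInt N a₁ l₁).image π).card ≤ (cycInt N a₁ l₁).card :=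
              Finset.card_image_le
          _ ≤ (Finset.range l₁).card := Finset.card_image_le
          _ = l₁ := Finset.card_range l₁
          _ ≤ N := h₁
      exact_mod_cast this
    have hcT : ((cycInt N a₂ l₂).card : ℝ) ≤ N := by exact_mod_cast hcT'
    have hcI : ((((cycInt N a₁ l₁).image π) ∩ cycInt N a₂ l₂).card : ℝ) ≤ N := by
      have : (((cycInt N a₁ l₁).image π) ∩ cycInt N a₂ l₂).card ≤ N := by
        calc (((cycInt N a₁ l₁).image π) ∩ cycInt N a₂ l₂).card
            ≤ (cycInt N a₂ l₂).card :=
              Finset.card_le_card Finset.inter_subset_right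
          _ ≤ N := hcT'
      exact_mod_cast this
    have hI0 : (0 : ℝ) ≤ ((((cycInt N a₁ l₁).image π) ∩ cycInt N a₂ l₂).card : ℝ) :=
      Nat.cast_nonneg _
    have hS0 : (0 : ℝ) ≤ (((cycInt N a₁ l₁).image π).card : ℝ) := Nat.cast_nonneg _
    have hT0 : (0 : ℝ) ≤ ((cycInt N a₂ l₂).card : ℝ) := Nat.cast_nonneg _
    have hprod : (((cycInt N a₁ l₁).image π).card : ℝ) * ((cycInt N a₂ l₂).card : ℝ) / N
        ≤ N := by
      rw [div_le_iff₀ hN0]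
      nlinarith
    have hprod0 : (0 : ℝ) ≤ (((cycInt N a₁ l₁).image π).card : ℝ)
        * ((cycInt N a₂ l₂).card : ℝ) / N := by positivity
    rw [disc]
    rw [abs_le]
    constructor <;> linarith
  have hmem2 : disc N ((cycInt N 0 n).image π) (cycInt N 0 m) ∈
      {x : ℝ | ∃ a₁ l₁ a₂ l₂, l₁ ≤ N ∧ l₂ ≤ N ∧
        x = disc N ((cycInt N a₁ l₁).image π) (cycInt N a₂ l₂)} :=
    ⟨0, n, 0, m, hn, hmN, rfl⟩
  have hle := le_csSup hbdd hmem2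
  rw [DFull]
  calc Real.log N / 100 - 1 < |c - (n : ℝ) * m / N| := hkey
    _ = disc N ((cycInt N 0 n).image π) (cycInt N 0 m) := hdiscval.symm
    _ ≤ _ := hle
end
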